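/- arXiv:2109.11694 — 2 statements merged into one kernel-verified Lean document; each statement's English description precedes it below -/
import Mathlib

section
/- Let γ : ℕ → ℝ be defined by γ_j = (log₂ j)^{−3} if j = 2^ℓ for some ℓ ∈ ℕ, ℓ ≥ 1, and γ_j = 0 otherwise. Then ∑_{j=1}^∞ γ_j^{1/2} converges, while ∑_{j=1}^∞ γ_j^2 (j log j)^3 diverges. -/
/-! Both series live on the powers `j = 2^(ℓ+1)`, where `γ_j = (ℓ+1)^{-3}`. There the first
series becomes the `p`-series `∑ (ℓ+1)^{-3/2}`, while the terms of the second are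
`(2^(ℓ+1) / (ℓ+1))^3 (log 2)^3 ≥ (log 2)^3`, so they do not tend to zero. -/

open Real

lemma not_summable_of_forall_le {ι : Type*} [Infinite ι] {f : ι → ℝ} {c : ℝ} (hc : 0 < c)
    (h : ∀ i, c ≤ f i) : ¬ Summable f := fun hf =>
  hc.not_ge (ge_of_tendsto' hf.tendsto_cofinite_zero h)

lemma summable_nat_add_one_rpow_iff {p : ℝ} :
    Summable (fun n : ℕ => ((n : ℝ) + 1) ^ p) ↔ p < -1 := by
  rw [← summable_nat_rpow]
  exact_mod_cast summable_nat_add_iff (f := fun n : ℕ => (n : ℝ) ^ p) 1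

lemma log_two_pow_three_le_rpow_sq_mul_two_pow_mul_log_pow (ℓ : ℕ) :
    log 2 ^ 3 ≤ (((ℓ : ℝ) + 1) ^ (-(3 : ℝ))) ^ 2 * ((2 : ℝ) ^ (ℓ + 1) * log (2 ^ (ℓ + 1))) ^ 3 := by
  set x : ℝ := (ℓ : ℝ) + 1 with hx
  have hx0 : 0 < x := by positivity
  have hlog : log ((2 : ℝ) ^ (ℓ + 1)) = x * log 2 := by rw [log_pow]; push_cast; rfl
  have hxN : x ≤ 2 ^ (ℓ + 1) := by
    rw [hx]; exact_mod_cast (Nat.lt_two_pow_self (n := ℓ + 1)).le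
  have hratio : 1 ≤ ((2 : ℝ) ^ (ℓ + 1) / x) ^ 3 :=
    one_le_pow₀ ((one_le_div hx0).2 hxN)
  calc log 2 ^ 3 ≤ ((2 : ℝ) ^ (ℓ + 1) / x) ^ 3 * log 2 ^ 3 :=
        le_mul_of_one_le_left (pow_pos (log_pos one_lt_two) 3).le hratio
    _ = (x ^ (-(3 : ℝ))) ^ 2 * ((2 : ℝ) ^ (ℓ + 1) * log (2 ^ (ℓ + 1))) ^ 3 := by
        rw [hlog, rpow_neg hx0.le, rpow_ofNat]
        field_simp

/-- Weights `γ_j = (log₂ j)^{-3}` for `j = 2^ℓ` (`ℓ ≥ 1`) and `γ_j = 0` otherwise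
satisfy `∑ γ_j^{1/2} < ∞` while `∑ γ_j^2 (j log j)^3 = ∞`. -/
theorem weights_summable_not_summable (γ : ℕ → ℝ)
    (h1 : ∀ ℓ : ℕ, 1 ≤ ℓ → γ (2 ^ ℓ) = (Real.logb 2 (2 ^ ℓ)) ^ (-(3 : ℝ)))
    (h2 : ∀ j : ℕ, (¬ ∃ ℓ : ℕ, 1 ≤ ℓ ∧ j = 2 ^ ℓ) → γ j = 0) :
    Summable (fun j : ℕ => (γ j) ^ ((1 : ℝ) / 2)) ∧
    ¬ Summable (fun j : ℕ => (γ j) ^ 2 * ((j : ℝ) * Real.log j) ^ 3) := by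
  set e : ℕ → ℕ := fun ℓ => 2 ^ (ℓ + 1)
  have he : e.Injective := fun a b hab => by simpa using Nat.pow_right_injective le_rfl hab
  have hγ (ℓ : ℕ) : γ (e ℓ) = ((ℓ : ℝ) + 1) ^ (-(3 : ℝ)) := by
    simp [e, h1 (ℓ + 1) ℓ.succ_pos, logb_pow]
  have hγ_zero (j : ℕ) (hj : j ∉ Set.range e) : γ j = 0 :=
    h2 j fun ⟨ℓ, hℓ, hj'⟩ => hj ⟨ℓ - 1, by simp [e, hj', Nat.sub_add_cancel hℓ]⟩
  constructor
  · rw [← he.summable_iff fun j hj => by rw [hγ_zero j hj, zero_rpow one_half_pos.ne']]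
    refine (summable_nat_add_one_rpow_iff.2 (by norm_num : -(3 : ℝ) * (1 / 2) < -1)).congr
      fun ℓ => ?_
    rw [Function.comp_apply, hγ, ← rpow_mul (by positivity)]
  · intro hs
    refine not_summable_of_forall_le (pow_pos (log_pos one_lt_two) 3) (fun ℓ => ?_)
      (hs.comp_injective he)
    simpa [e, hγ] using log_two_pow_three_le_rpow_sq_mul_two_pow_mul_log_pow ℓ
end

section
/- Let N be prime, s ≥ 2, τ ∈ (0,1), and suppose Z_2,…,Z_s are subsets of {1,…,N−1}, each of size ⌈τ(N−1)⌉, where Z_ℓ may depend on the previously chosen components. Let 𝒵 be the set of vectors z = (1, z_2,…,z_s) obtainable by choosing z_ℓ ∈ Z_ℓ for ℓ = 2,…,s. Fix k ∈ ℤ^s with k·z possibly ≡ 0 (mod N). If not all components of k are divisible by N, then the number of z ∈ 𝒵 with k · z ≡ 0 (mod N) is at most ⌈τ(N−1)⌉^{s−2}, hence the proportion of such z in 𝒵 is at most 1/⌈τ(N−1)⌉. -/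
/-!
Encode an admissible vector `z` by the ranks of its coordinates `z j` inside the candidate sets
`Z j z`. Since `Z j` only sees the coordinates before `j`, strong induction shows that the ranks
determine `z`, and every rank vector is realised, so `𝒵` has exactly `M ^ s` elements,
`M = ⌈τ(N-1)⌉`. Let `L` be the last index with `N ∤ k L`. The congruence `k · z ≡ 0 (mod N)`
then fixes `z L` modulo `N` in terms of `z 0, …, z (L-1)`, hence fixes it outright because
`z L ∈ [1, N-1]`; so the ranks at the free coordinates other than `L` already determine `z`, and
there are at most `M ^ (s-1)` solutions. For `L = 0` there are none, as `k · z ≡ k 0 ≢ 0`.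
-/

open Finset

section Causal

variable {α β : Type*}

def IsCausal (c : ℕ → (ℕ → α) → β) : Prop :=
  ∀ j v w, (∀ i < j, v i = w i) → c j v = c j w

def causalFix [Inhabited α] (c : ℕ → (ℕ → α) → α) : ℕ → α
  | j => c j fun i => if i < j then causalFix c i else default

theorem causalFix_eq [Inhabited α] {c : ℕ → (ℕ → α) → α} (hc : IsCausal c) (j : ℕ) :
    causalFix c j = c j (causalFix c) := by
  rw [causalFix]
  exact hc _ _ _ fun i hi => if_pos hi

end Causal

section Rank

variable {α : Type*} [LinearOrder α] {F : Finset α} {x : α}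

def Finset.rank (F : Finset α) (x : α) : ℕ := #{y ∈ F | y < x}

theorem Finset.rank_lt_card (hx : x ∈ F) : F.rank x < #F :=
  card_lt_card <| filter_ssubset.2 ⟨x, hx, lt_irrefl x⟩

theorem Finset.rank_strictMonoOn : StrictMonoOn F.rank F := by
  intro x hx y hy hxy
  refine card_lt_card ⟨fun y hy => ?_, ?_⟩
  · simp only [mem_filter] at hy ⊢
    exact ⟨hy.1, hy.2.trans hxy⟩
  exact not_subset.2 ⟨x, mem_filter.2 ⟨hx, hxy⟩, fun h => lt_irrefl x (mem_filter.1 h).2⟩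

theorem Finset.rank_injOn : Set.InjOn F.rank F :=
  rank_strictMonoOn.injOn

end Rank

section Admissible

variable {α : Type*} [LinearOrder α] {Z : ℕ → (ℕ → α) → Finset α} {M : ℕ}
  {T : Finset ℕ} {b : ℕ → α}

def admissible (Z : ℕ → (ℕ → α) → Finset α) (T : Finset ℕ) (b : ℕ → α) : Set (ℕ → α) :=
  {z | (∀ j ∈ T, z j ∈ Z j z) ∧ ∀ j ∉ T, z j = b j}

def ranks (Z : ℕ → (ℕ → α) → Finset α) (T : Finset ℕ) (z : ℕ → α) (j : T) : ℕ :=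
  (Z j z).rank (z j)

def IsDeterminedOff (A : Set (ℕ → α)) (T : Finset ℕ) : Prop :=
  ∀ z ∈ A, ∀ w ∈ A, ∀ j ∉ T, (∀ i < j, z i = w i) → z j = w j

variable {A : Set (ℕ → α)}

theorem injOn_ranks (hZ : IsCausal Z) (hmem : ∀ z ∈ A, ∀ j ∈ T, z j ∈ Z j z)
    (hdet : IsDeterminedOff A T) : Set.InjOn (ranks Z T) A := by
  intro z hz w hw hzw
  funext j
  induction j using Nat.strong_induction_on with
  | _ j ih =>
    by_cases hj : j ∈ T
    · have hZj : Z j z = Z j w := hZ j z w ih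
      refine rank_injOn (hmem z hz j hj) (hZj ▸ hmem w hw j hj) ?_
      simpa [ranks, hZj] using congrFun hzw ⟨j, hj⟩
    · exact hdet z hz w hw j hj ih

theorem mapsTo_ranks (hcard : ∀ j v, #(Z j v) = M) (hmem : ∀ z ∈ A, ∀ j ∈ T, z j ∈ Z j z) :
    Set.MapsTo (ranks Z T) A (Fintype.piFinset fun _ : T => range M : Set (T → ℕ)) := by
  intro z hz
  simpa [ranks] using fun j hj => hcard j z ▸ rank_lt_card (hmem z hz j hj)

theorem finite_of_ranks (hZ : IsCausal Z) (hcard : ∀ j v, #(Z j v) = M)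
    (hmem : ∀ z ∈ A, ∀ j ∈ T, z j ∈ Z j z) (hdet : IsDeterminedOff A T) : A.Finite :=
  (finite_toSet _).of_injOn (mapsTo_ranks hcard hmem) (injOn_ranks hZ hmem hdet)

theorem ncard_le_pow_of_ranks (hZ : IsCausal Z) (hcard : ∀ j v, #(Z j v) = M)
    (hmem : ∀ z ∈ A, ∀ j ∈ T, z j ∈ Z j z) (hdet : IsDeterminedOff A T) :
    A.ncard ≤ M ^ #T := by
  have := Set.ncard_le_ncard_of_injOn _ (mapsTo_ranks hcard hmem) (injOn_ranks hZ hmem hdet)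
    (finite_toSet _)
  rwa [Set.ncard_coe_finset, Fintype.card_piFinset, prod_const, card_range, card_univ,
    Fintype.card_coe] at this

noncomputable def seqOfRanks [Inhabited α] (Z : ℕ → (ℕ → α) → Finset α)
    (hcard : ∀ j v, #(Z j v) = M) (T : Finset ℕ) (b : ℕ → α) (f : T → Fin M) : ℕ → α :=
  causalFix fun j v => if h : j ∈ T then (Z j v).orderEmbOfFin (hcard j v) (f ⟨j, h⟩) else b j

section SeqOfRanks

variable [Inhabited α] (hcard : ∀ j v, #(Z j v) = M) (f : T → Fin M)

theorem seqOfRanks_apply_of_mem (hZ : IsCausal Z) (j : ℕ) (hj : j ∈ T) :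
    seqOfRanks Z hcard T b f j =
      (Z j (seqOfRanks Z hcard T b f)).orderEmbOfFin (hcard _ _) (f ⟨j, hj⟩) := by
  rw [seqOfRanks, causalFix_eq]
  · exact dif_pos hj
  · intro j v w hvw
    simp only [hZ j v w hvw]

theorem seqOfRanks_apply_of_notMem (hZ : IsCausal Z) (j : ℕ) (hj : j ∉ T) :
    seqOfRanks Z hcard T b f j = b j := by
  rw [seqOfRanks, causalFix_eq]
  · exact dif_neg hj
  · intro j v w hvw
    simp only [hZ j v w hvw]

theorem seqOfRanks_mem_admissible (hZ : IsCausal Z) :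
    seqOfRanks Z hcard T b f ∈ admissible Z T b := by
  refine ⟨fun j hj => ?_, seqOfRanks_apply_of_notMem hcard f hZ⟩
  rw [seqOfRanks_apply_of_mem hcard f hZ j hj]
  exact orderEmbOfFin_mem _ _ _

theorem seqOfRanks_injective (hZ : IsCausal Z) :
    Function.Injective (seqOfRanks Z hcard T b) := by
  intro f g hfg
  funext ⟨j, hj⟩
  have hj' := congrFun hfg j
  rw [seqOfRanks_apply_of_mem hcard f hZ j hj, seqOfRanks_apply_of_mem hcard g hZ j hj, hfg]
    at hj'
  exact (orderEmbOfFin _ _).injective hj'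

end SeqOfRanks

theorem ncard_admissible (hZ : IsCausal Z) (hcard : ∀ j v, #(Z j v) = M) :
    (admissible Z T b).ncard = M ^ #T := by
  have hdet : IsDeterminedOff (admissible Z T b) T :=
    fun z hz w hw j hj _ => (hz.2 j hj).trans (hw.2 j hj).symm
  refine (ncard_le_pow_of_ranks hZ hcard (fun z hz => hz.1) hdet).antisymm ?_
  let _ : Inhabited α := ⟨b 0⟩
  calc M ^ #T = (Set.range (seqOfRanks Z hcard T b)).ncard := by
        rw [Set.ncard_range_of_injective (seqOfRanks_injective hcard hZ)]
        simp
    _ ≤ (admissible Z T b).ncard :=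
        Set.ncard_le_ncard (Set.range_subset_iff.2 fun f => seqOfRanks_mem_admissible hcard f hZ)
          (finite_of_ranks hZ hcard (fun z hz => hz.1) hdet)

end Admissible

theorem Nat.exists_last_not_of_not_forall_le {P : ℕ → Prop} {s : ℕ} (h : ¬ ∀ j ≤ s, P j) :
    ∃ L ≤ s, ¬ P L ∧ ∀ j, L < j → j ≤ s → P j := by
  classical
  push Not at h
  obtain ⟨j, hjs, hj⟩ := h
  exact ⟨Nat.findGreatest (¬ P ·) s, Nat.findGreatest_le s,
    Nat.findGreatest_spec (P := (¬ P ·)) hjs hj, fun i hi his => not_not.1 (Nat.findGreatest_is_greatest hi his)⟩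

theorem Prime.dvd_of_dvd_sum_range_mul {R : Type*} [CommRing R] {p : R} (hp : Prime p)
    {n L : ℕ} {k x : ℕ → R} (hLn : L < n) (hkL : ¬ p ∣ k L)
    (hk : ∀ j, L < j → j < n → p ∣ k j) (hx : ∀ i < L, x i = 0)
    (hsum : p ∣ ∑ j ∈ range n, k j * x j) : p ∣ x L := by
  rw [← add_sum_erase _ _ (mem_range.2 hLn)] at hsum
  have hrest : p ∣ ∑ j ∈ (range n).erase L, k j * x j := by
    refine dvd_sum fun j hj => ?_
    obtain ⟨hjL, hjn⟩ := mem_erase.1 hj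
    rcases lt_or_gt_of_ne hjL with hlt | hgt
    · simp [hx j hlt]
    · exact (hk j hgt (mem_range.1 hjn)).mul_right _
  exact (hp.dvd_or_dvd ((dvd_add_left hrest).1 hsum)).resolve_left hkL

theorem ncard_admissible_dvd_sum_le {N n L M : ℕ} (hN : N.Prime) {Z : ℕ → (ℕ → ℤ) → Finset ℤ}
    (hZ : IsCausal Z) (hsub : ∀ j v, Z j v ⊆ Icc (1 : ℤ) (N - 1)) (hcard : ∀ j v, #(Z j v) = M)
    {T : Finset ℕ} {b : ℕ → ℤ} {k : ℕ → ℤ} (hLT : L ∈ T) (hLn : L < n)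
    (hkL : ¬ (N : ℤ) ∣ k L) (hk : ∀ j, L < j → j < n → (N : ℤ) ∣ k j) :
    {z ∈ admissible Z T b | (N : ℤ) ∣ ∑ j ∈ range n, k j * z j}.ncard ≤ M ^ (#T - 1) := by
  rw [← card_erase_of_mem hLT]
  refine ncard_le_pow_of_ranks hZ hcard (fun z hz j hj => hz.1.1 j (mem_of_mem_erase hj)) ?_
  intro z hz w hw j hj hzw
  by_cases hjT : j ∈ T
  · obtain rfl : j = L := by simpa [hjT] using hj
    have hdvd : (N : ℤ) ∣ z j - w j := by
      refine (Nat.prime_iff_prime_int.1 hN).dvd_of_dvd_sum_range_mul hLn hkL hk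
        (fun i hi => sub_eq_zero.2 (hzw i hi)) ?_
      simpa [mul_sub, sum_sub_distrib] using dvd_sub hz.2 hw.2
    have hzj := mem_Icc.1 (hsub j z (hz.1.1 j hjT))
    have hwj := mem_Icc.1 (hsub j w (hw.1.1 j hjT))
    exact sub_eq_zero.1 (Int.eq_zero_of_abs_lt_dvd hdvd (abs_lt.2 ⟨by omega, by omega⟩))
  · exact (hz.1.2 j hjT).trans (hw.1.2 j hjT).symm

theorem mem_admissible_Icc_single_iff {α : Type*} [LinearOrder α] [Zero α] [One α]
    {Z : ℕ → (ℕ → α) → Finset α} {s : ℕ} {z : ℕ → α} :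
    z ∈ admissible Z (Icc 1 s) (Pi.single 0 1) ↔
      z 0 = 1 ∧ (∀ ℓ, 1 ≤ ℓ → ℓ ≤ s → z ℓ ∈ Z ℓ z) ∧ (∀ ℓ, s < ℓ → z ℓ = 0) := by
  simp only [admissible, Set.mem_ofPred_eq, mem_Icc, not_and_or, not_le]
  constructor
  · rintro ⟨hmem, hfix⟩
    exact ⟨by simpa using hfix 0 (by omega), fun ℓ h1 h2 => hmem ℓ ⟨h1, h2⟩,
      fun ℓ hℓ => by simpa [show ℓ ≠ 0 by omega] using hfix ℓ (by omega)⟩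
  · rintro ⟨h0, hmem, htop⟩
    refine ⟨fun ℓ hℓ => hmem ℓ hℓ.1 hℓ.2, fun ℓ hℓ => ?_⟩
    rcases Nat.eq_zero_or_pos ℓ with rfl | hpos
    · simpa using h0
    · simpa [hpos.ne'] using htop ℓ (by omega)

theorem div_le_one_div_of_le_pow_pred {a M s : ℕ} (hs : 1 ≤ s) (ha : a ≤ M ^ (s - 1)) :
    (a : ℝ) / ((M ^ s : ℕ) : ℝ) ≤ 1 / M := by
  rcases M.eq_zero_or_pos with rfl | hM
  · simp [zero_pow (by omega : s ≠ 0)]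
  · rw [div_le_div_iff₀ (by positivity) (by positivity), one_mul]
    exact_mod_cast (Nat.mul_le_mul_right M ha).trans_eq (by rw [← pow_succ, Nat.sub_add_cancel hs])

theorem cbc_dual_count_bound_general (N s : ℕ) (hN : N.Prime)
    (τ : ℝ)
    (Z : ℕ → (ℕ → ℤ) → Finset ℤ)
    (hdep : ∀ ℓ v w, (∀ i, i < ℓ → v i = w i) → Z ℓ v = Z ℓ w)
    (hsub : ∀ ℓ v, Z ℓ v ⊆ Finset.Icc (1 : ℤ) ((N : ℤ) - 1))
    (hcard : ∀ ℓ v, (Z ℓ v).card = ⌈τ * ((N : ℝ) - 1)⌉₊)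
    (k : ℕ → ℤ) (hk : ¬ ∀ j ≤ s, (N : ℤ) ∣ k j) :
    ({z : ℕ → ℤ |
        (z 0 = 1 ∧ (∀ ℓ, 1 ≤ ℓ → ℓ ≤ s → z ℓ ∈ Z ℓ z) ∧ (∀ ℓ, s < ℓ → z ℓ = 0)) ∧
        (∑ j ∈ Finset.range (s + 1), k j * z j) % (N : ℤ) = 0}.ncard
      ≤ ⌈τ * ((N : ℝ) - 1)⌉₊ ^ (s - 1)) ∧
    (({z : ℕ → ℤ |
        (z 0 = 1 ∧ (∀ ℓ, 1 ≤ ℓ → ℓ ≤ s → z ℓ ∈ Z ℓ z) ∧ (∀ ℓ, s < ℓ → z ℓ = 0)) ∧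
        (∑ j ∈ Finset.range (s + 1), k j * z j) % (N : ℤ) = 0}.ncard : ℝ) /
      ({z : ℕ → ℤ |
        z 0 = 1 ∧ (∀ ℓ, 1 ≤ ℓ → ℓ ≤ s → z ℓ ∈ Z ℓ z) ∧ (∀ ℓ, s < ℓ → z ℓ = 0)}.ncard : ℝ)
      ≤ 1 / (⌈τ * ((N : ℝ) - 1)⌉₊ : ℝ)) := by
  obtain ⟨L, hLs, hkL, hkgt⟩ := Nat.exists_last_not_of_not_forall_le hk
  simp_rw [← mem_admissible_Icc_single_iff, ← Int.dvd_iff_emod_eq_zero, Set.ofPred_mem_eq]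
  rcases Nat.eq_zero_or_pos L with rfl | hL
  · have hB : {z ∈ admissible Z (Icc 1 s) (Pi.single 0 1) |
        (N : ℤ) ∣ ∑ j ∈ range (s + 1), k j * z j} = ∅ := by
      refine Set.eq_empty_of_forall_notMem fun z ⟨hz, hdvd⟩ => ?_
      have hz0 : z 0 = 1 := (mem_admissible_Icc_single_iff.1 hz).1
      refine (Nat.prime_iff_prime_int.1 hN).not_dvd_one (hz0 ▸ ?_)
      exact (Nat.prime_iff_prime_int.1 hN).dvd_of_dvd_sum_range_mul (by omega) hkL
        (fun j hj hjs => hkgt j hj (by omega)) (by simp) hdvd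
    simp [hB]
  · have hB := ncard_admissible_dvd_sum_le hN hdep hsub hcard (T := Icc 1 s) (b := Pi.single 0 1)
      (mem_Icc.2 ⟨hL, hLs⟩) (Nat.lt_succ_of_le hLs) hkL fun j hj hjs => hkgt j hj (by omega)
    rw [Nat.card_Icc, add_tsub_cancel_right] at hB
    rw [ncard_admissible hdep hcard, Nat.card_Icc, add_tsub_cancel_right]
    exact ⟨hB, div_le_one_div_of_le_pow_pred (by omega) hB⟩

/-- Let `N` be prime, total dimension `s + 1 ≥ 2`, `τ ∈ (0,1)`, and for each coordinate
`ℓ ∈ {1,…,s}` let `Z ℓ` be a set of `⌈τ(N-1)⌉` candidates in `{1,…,N-1}`, possibly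
depending on the previously chosen components (only on coordinates `< ℓ`).  Let `𝒵` be
the set of vectors `z` with `z 0 = 1`, `z ℓ ∈ Z ℓ z` for `1 ≤ ℓ ≤ s` (and `z ℓ = 0` for
`ℓ > s`).  If not all components `k 0,…,k s` of `k` are divisible by `N`, then the number
of `z ∈ 𝒵` with `k · z ≡ 0 (mod N)` is at most `⌈τ(N-1)⌉^{s-1}`, hence the proportion of
such `z` in `𝒵` is at most `1/⌈τ(N-1)⌉`. -/
theorem cbc_dual_count_bound (N s : ℕ) (hN : N.Prime) (hs : 1 ≤ s)
    (τ : ℝ) (hτ : τ ∈ Set.Ioo (0 : ℝ) 1)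
    (Z : ℕ → (ℕ → ℤ) → Finset ℤ)
    (hdep : ∀ ℓ v w, (∀ i, i < ℓ → v i = w i) → Z ℓ v = Z ℓ w)
    (hsub : ∀ ℓ v, Z ℓ v ⊆ Finset.Icc (1 : ℤ) ((N : ℤ) - 1))
    (hcard : ∀ ℓ v, (Z ℓ v).card = ⌈τ * ((N : ℝ) - 1)⌉₊)
    (k : ℕ → ℤ) (hk : ¬ ∀ j ≤ s, (N : ℤ) ∣ k j) :
    ({z : ℕ → ℤ |
        (z 0 = 1 ∧ (∀ ℓ, 1 ≤ ℓ → ℓ ≤ s → z ℓ ∈ Z ℓ z) ∧ (∀ ℓ, s < ℓ → z ℓ = 0)) ∧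
        (∑ j ∈ Finset.range (s + 1), k j * z j) % (N : ℤ) = 0}.ncard
      ≤ ⌈τ * ((N : ℝ) - 1)⌉₊ ^ (s - 1)) ∧
    (({z : ℕ → ℤ |
        (z 0 = 1 ∧ (∀ ℓ, 1 ≤ ℓ → ℓ ≤ s → z ℓ ∈ Z ℓ z) ∧ (∀ ℓ, s < ℓ → z ℓ = 0)) ∧
        (∑ j ∈ Finset.range (s + 1), k j * z j) % (N : ℤ) = 0}.ncard : ℝ) /
      ({z : ℕ → ℤ |
        z 0 = 1 ∧ (∀ ℓ, 1 ≤ ℓ → ℓ ≤ s → z ℓ ∈ Z ℓ z) ∧ (∀ ℓ, s < ℓ → z ℓ = 0)}.ncard : ℝ)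
      ≤ 1 / (⌈τ * ((N : ℝ) - 1)⌉₊ : ℝ)) :=
  cbc_dual_count_bound_general N s hN τ Z hdep hsub hcard k hk
end
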